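/- arXiv:math/9812002 — 4 statements merged into one kernel-verified Lean document; each statement's English description precedes it below -/
import Mathlib

section
/- ((1+t³)^{2g} - t^{2g}(1+t)^{2g}) is divisible by (1-t²)(1-t⁴) in ℤ[t] for every natural number g ≥ 1; equivalently, the Harder–Narasimhan expression P_g(t) = ((1+t³)^{2g} - t^{2g}(1+t)^{2g})/((1-t²)(1-t⁴)) is a polynomial with integer coefficients. -/
open Polynomial

theorem one_sub_sq_mul_one_sub_pow_four_eq {R : Type*} [CommRing R] (t : R) :
    (1 - t ^ 2) * (1 - t ^ 4) = (1 + t ^ 3) ^ 2 - (t * (1 + t)) ^ 2 := by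
  ring

theorem one_sub_sq_mul_one_sub_pow_four_dvd {R : Type*} [CommRing R] (t : R) (g : ℕ) :
    (1 - t ^ 2) * (1 - t ^ 4) ∣ (1 + t ^ 3) ^ (2 * g) - t ^ (2 * g) * (1 + t) ^ (2 * g) := by
  rw [one_sub_sq_mul_one_sub_pow_four_eq, ← mul_pow, pow_mul, pow_mul]
  exact sub_dvd_pow_sub_pow _ _ g

theorem HN_numerator_divisible_general (g : ℕ) :
    ((1 - X ^ 2) * (1 - X ^ 4) : Polynomial ℤ) ∣
      ((1 + X ^ 3) ^ (2 * g) - X ^ (2 * g) * (1 + X) ^ (2 * g)) :=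
  one_sub_sq_mul_one_sub_pow_four_dvd X g

/-- `(1-t²)(1-t⁴)` divides `(1+t³)^{2g} - t^{2g}(1+t)^{2g}` in `ℤ[t]`
for every `g ≥ 1`; i.e. the Harder–Narasimhan expression is a polynomial with
integer coefficients. -/
theorem HN_numerator_divisible (g : ℕ) (hg : 1 ≤ g) :
    ((1 - X ^ 2) * (1 - X ^ 4) : Polynomial ℤ) ∣
      ((1 + X ^ 3) ^ (2 * g) - X ^ (2 * g) * (1 + X) ^ (2 * g)) :=
  HN_numerator_divisible_general g
end

section
/- ((1+t³)^{2g} − (t+t²)^{2g}) is divisible by (1−t²)(1−t⁴) in ℤ[t] for every g ≥ 1. -/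
open Polynomial

/-!
Both terms share the factor `(1 + t)`: `1 + t³ = (1 + t)(1 - t + t²)` and `t + t² = (1 + t) t`, while
`(1 - t²)(1 - t⁴) = (1 + t)² ((1 - t + t²)² - t²)`. So the numerator is `(1 + t)^{2g}` times
`((1 - t + t²)²)^g - (t²)^g`, and `x - y ∣ x^g - y^g`.
-/

theorem sq_mul_sq_sub_sq_dvd_mul_pow_sub_mul_pow {R : Type*} [CommRing R] (a b c : R) (g : ℕ) :
    c ^ 2 * (a ^ 2 - b ^ 2) ∣ (c * a) ^ (2 * g) - (c * b) ^ (2 * g) := by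
  cases g with
  | zero => simp
  | succ n =>
    rw [mul_pow, mul_pow, ← mul_sub, pow_mul a, pow_mul b]
    exact mul_dvd_mul (pow_dvd_pow c (by omega)) (sub_dvd_pow_sub_pow _ _ _)

theorem punctured_HN_numerator_divisible_general (g : ℕ) :
    ((1 - X ^ 2) * (1 - X ^ 4) : Polynomial ℤ) ∣
      ((1 + X ^ 3) ^ (2 * g) - (X + X ^ 2) ^ (2 * g)) := by
  have h := sq_mul_sq_sub_sq_dvd_mul_pow_sub_mul_pow (1 - X + X ^ 2 : ℤ[X]) X (1 + X) g
  rwa [show ((1 + X) ^ 2 * ((1 - X + X ^ 2) ^ 2 - X ^ 2) : ℤ[X]) = (1 - X ^ 2) * (1 - X ^ 4) by ring,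
    show ((1 + X) * (1 - X + X ^ 2) : ℤ[X]) = 1 + X ^ 3 by ring,
    show ((1 + X) * X : ℤ[X]) = X + X ^ 2 by ring] at h

/-- `(1−t²)(1−t⁴)` divides `(1+t³)^{2g} − (t+t²)^{2g}` in `ℤ[t]`
for every `g ≥ 1`. -/
theorem punctured_HN_numerator_divisible (g : ℕ) (hg : 1 ≤ g) :
    ((1 - X ^ 2) * (1 - X ^ 4) : Polynomial ℤ) ∣
      ((1 + X ^ 3) ^ (2 * g) - (X + X ^ 2) ^ (2 * g)) :=
  punctured_HN_numerator_divisible_general g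
end

section
/- The center of SU(2) is {I, -I}, and the conjugation action of SU(2)/{±I} on the set {(A_1,B_1,…,A_g,B_g) ∈ SU(2)^{2g} : ∏_i [A_i,B_i] = -I} is free, i.e., if X ∈ SU(2) satisfies X A_i X⁻¹ = A_i and X B_i X⁻¹ = B_i for all i, then X = ±I. -/
/-!
Two `2 × 2` matrices commute exactly when their images in `gl₂ / scalars` are proportional.
Hence the centralizer of a non-scalar matrix is commutative, so a matrix commuting with two
non-commuting matrices is scalar, and a scalar matrix of determinant `1` is `±I`.
`SU(2)` contains two non-commuting elements, which gives the center; and if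
`∏ [A_i, B_i] = -I` then some pair `A_i, B_i` does not commute, which gives freeness.
-/

open Matrix

section Proportional

variable {ι R : Type*} [CommRing R]

def Proportional (u v : ι → R) : Prop :=
  ∀ i j, u i * v j = u j * v i

theorem Proportional.trans_of_ne_zero [NoZeroDivisors R] {u v x : ι → R}
    (hx : x ≠ 0) (hu : Proportional u x) (hv : Proportional v x) : Proportional u v := by
  obtain ⟨k, hk⟩ := Function.ne_iff.mp hx
  intro i j
  have : x k * (u i * v j - u j * v i) = 0 := by
    linear_combination v j * hu i k - u k * hv i j + v i * hu k j
  exact sub_eq_zero.mp ((mul_eq_zero.mp this).resolve_left hk)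

end Proportional

namespace Matrix

section FinTwo

variable {R : Type*} [CommRing R]

/-- Coordinates of the image of `A` in the quotient of `gl₂(R)` by the scalar matrices. -/
def coordsModScalars (A : Matrix (Fin 2) (Fin 2) R) : Fin 3 → R :=
  ![A 0 0 - A 1 1, A 0 1, A 1 0]

theorem commute_iff_proportional_coordsModScalars {A B : Matrix (Fin 2) (Fin 2) R} :
    Commute A B ↔ Proportional A.coordsModScalars B.coordsModScalars := by
  simp only [Commute, SemiconjBy, ← Matrix.ext_iff, Proportional, Fin.forall_fin_succ, mul_apply,
    Fin.sum_univ_two, coordsModScalars, Fin.isValue, Fin.succ_zero_eq_one, IsEmpty.forall_iff,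
    and_true, cons_val_zero, cons_val_succ, cons_val_fin_one, true_and]
  constructor
  · rintro ⟨⟨h00, h01⟩, h10, -⟩
    exact ⟨⟨by linear_combination h01, by linear_combination -h10⟩,
      ⟨by linear_combination -h01, by linear_combination h00⟩,
      by linear_combination h10, by linear_combination -h00⟩
  · rintro ⟨⟨h01, h10⟩, -, -, h00⟩
    exact ⟨⟨by linear_combination -h00, by linear_combination h01⟩,
      by linear_combination -h10, by linear_combination h00⟩

variable [NoZeroDivisors R]

theorem commute_of_commute_of_coordsModScalars_ne_zero {A B X : Matrix (Fin 2) (Fin 2) R}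
    (hX : X.coordsModScalars ≠ 0) (hA : Commute A X) (hB : Commute B X) : Commute A B := by
  rw [commute_iff_proportional_coordsModScalars] at hA hB ⊢
  exact hA.trans_of_ne_zero hX hB

theorem eq_one_or_eq_neg_one_of_coordsModScalars_eq_zero {X : Matrix (Fin 2) (Fin 2) R}
    (hdet : X.det = 1) (hX : X.coordsModScalars = 0) : X = 1 ∨ X = -1 := by
  have hdiag : X 0 0 = X 1 1 := sub_eq_zero.mp (congrFun hX 0)
  have h01 : X 0 1 = 0 := congrFun hX 1
  have h10 : X 1 0 = 0 := congrFun hX 2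
  have hscalar : X = X 0 0 • (1 : Matrix (Fin 2) (Fin 2) R) := by
    ext i j
    fin_cases i <;> fin_cases j <;> simp [h01, h10, hdiag]
  rw [det_fin_two, h01, h10, ← hdiag, mul_zero, sub_zero, mul_self_eq_one_iff] at hdet
  rw [hscalar]
  rcases hdet with h | h <;> simp [h]

theorem eq_one_or_eq_neg_one_of_commute_of_not_commute {A B X : Matrix (Fin 2) (Fin 2) R}
    (hdet : X.det = 1) (hAB : ¬Commute A B) (hA : Commute A X) (hB : Commute B X) :
    X = 1 ∨ X = -1 := by
  refine eq_one_or_eq_neg_one_of_coordsModScalars_eq_zero hdet ?_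
  by_contra hX
  exact hAB (commute_of_commute_of_coordsModScalars_ne_zero hX hA hB)

end FinTwo

section Commutator

variable {n R : Type*} [Fintype n] [DecidableEq n] [CommRing R]

theorem commute_of_mul_mul_nonsing_inv_eq {A X : Matrix n n R} (hX : IsUnit X.det)
    (h : X * A * X⁻¹ = A) : Commute A X :=
  calc A * X = X * A * X⁻¹ * X := by rw [h]
    _ = X * A := nonsing_inv_mul_cancel_right X _ hX

theorem mul_mul_nonsing_inv_mul_nonsing_inv_of_commute {A B : Matrix n n R}
    (hA : IsUnit A.det) (hB : IsUnit B.det) (h : Commute A B) : A * B * A⁻¹ * B⁻¹ = 1 := by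
  rw [h.eq, mul_nonsing_inv_cancel_right A _ hA, mul_nonsing_inv B hB]

theorem exists_not_commute_of_prod_commutators_ne_one {ι : Type*} {l : List ι}
    {A B : ι → Matrix n n R} (hA : ∀ i, IsUnit (A i).det) (hB : ∀ i, IsUnit (B i).det)
    (h : (l.map fun i => A i * B i * (A i)⁻¹ * (B i)⁻¹).prod ≠ 1) :
    ∃ i, ¬Commute (A i) (B i) := by
  contrapose! h
  refine List.prod_eq_one fun _ hM => ?_
  obtain ⟨i, -, rfl⟩ := List.mem_map.mp hM
  exact mul_mul_nonsing_inv_mul_nonsing_inv_of_commute (hA i) (hB i) (h i)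

end Commutator

theorem exists_not_commute_mem_specialUnitaryGroup_fin_two :
    ∃ A ∈ specialUnitaryGroup (Fin 2) ℂ, ∃ B ∈ specialUnitaryGroup (Fin 2) ℂ, ¬Commute A B := by
  refine ⟨!![Complex.I, 0; 0, -Complex.I], ?_, !![0, 1; -1, 0], ?_, fun h => ?_⟩
  · rw [mem_specialUnitaryGroup_iff, mem_unitaryGroup_iff, det_fin_two_of]
    refine ⟨?_, by simp⟩
    ext i j
    fin_cases i <;> fin_cases j <;> simp [mul_apply, star_eq_conjTranspose]
  · rw [mem_specialUnitaryGroup_iff, mem_unitaryGroup_iff, det_fin_two_of]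
    refine ⟨?_, by simp⟩
    ext i j
    fin_cases i <;> fin_cases j <;> simp [mul_apply, star_eq_conjTranspose]
  · have h01 : Complex.I = -Complex.I := by simpa using congrFun (congrFun h.eq 0) 1
    exact Complex.I_ne_zero (self_eq_neg.mp h01)

end Matrix

/-- The center of SU(2) is `{I, -I}`, and the conjugation action of
`SU(2)/{±I}` on `{(A_i, B_i) ∈ SU(2)^{2g} : ∏ [A_i, B_i] = -I}` is free: any
`X ∈ SU(2)` commuting with all the `A_i` and `B_i` is `±I`. -/
theorem su2_center_and_free_action (g : ℕ) :
    -- the center of SU(2) is {I, -I}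
    (∀ X : Matrix (Fin 2) (Fin 2) ℂ, X ∈ Matrix.specialUnitaryGroup (Fin 2) ℂ →
      ((∀ Y : Matrix (Fin 2) (Fin 2) ℂ, Y ∈ Matrix.specialUnitaryGroup (Fin 2) ℂ →
        X * Y = Y * X) ↔ (X = 1 ∨ X = -1))) ∧
    -- freeness of the conjugation action on μ_g⁻¹(I)
    (∀ A B : Fin g → Matrix (Fin 2) (Fin 2) ℂ,
      (∀ i, A i ∈ Matrix.specialUnitaryGroup (Fin 2) ℂ) →
      (∀ i, B i ∈ Matrix.specialUnitaryGroup (Fin 2) ℂ) →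
      ((List.finRange g).map (fun i => A i * B i * (A i)⁻¹ * (B i)⁻¹)).prod = -1 →
      ∀ X : Matrix (Fin 2) (Fin 2) ℂ, X ∈ Matrix.specialUnitaryGroup (Fin 2) ℂ →
        (∀ i, X * A i * X⁻¹ = A i ∧ X * B i * X⁻¹ = B i) →
        X = 1 ∨ X = -1) := by
  have hdet {M : Matrix (Fin 2) (Fin 2) ℂ} (hM : M ∈ specialUnitaryGroup (Fin 2) ℂ) :
      M.det = 1 :=
    (mem_specialUnitaryGroup_iff.mp hM).2
  have hunit {M : Matrix (Fin 2) (Fin 2) ℂ} (hM : M ∈ specialUnitaryGroup (Fin 2) ℂ) :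
      IsUnit M.det :=
    hdet hM ▸ isUnit_one
  refine ⟨fun X hX => ⟨fun hcentral => ?_, ?_⟩, fun A B hA hB hprod X hX hconj => ?_⟩
  · obtain ⟨Y, hY, Z, hZ, hYZ⟩ := exists_not_commute_mem_specialUnitaryGroup_fin_two
    exact eq_one_or_eq_neg_one_of_commute_of_not_commute (hdet hX) hYZ
      (hcentral Y hY).symm (hcentral Z hZ).symm
  · rintro (rfl | rfl) Y - <;> simp
  · have hne : (-1 : Matrix (Fin 2) (Fin 2) ℂ) ≠ 1 := fun h =>
      absurd (congrFun (congrFun h 0) 0) (by norm_num)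
    obtain ⟨i, hi⟩ := exists_not_commute_of_prod_commutators_ne_one
      (fun i => hunit (hA i)) (fun i => hunit (hB i)) (hprod ▸ hne)
    exact eq_one_or_eq_neg_one_of_commute_of_not_commute (hdet hX) hi
      (commute_of_mul_mul_nonsing_inv_eq (hunit hX) (hconj i).1)
      (commute_of_mul_mul_nonsing_inv_eq (hunit hX) (hconj i).2)
end

section
/- For all A, B ∈ SU(2): tr(ABA⁻¹B⁻¹) = (tr A)² + (tr B)² + (tr AB)² − tr(A)tr(B)tr(AB) − 2. In particular, ABA⁻¹B⁻¹ = −I implies (tr A)² + (tr B)² + (tr AB)² = tr(A)tr(B)tr(AB). -/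
open Matrix

/-! For `M ∈ SL₂`, Cayley–Hamilton reads `M² = (tr M) M - 1`, equivalently `M⁻¹ = (tr M) 1 - M`.
Substituting this for `A⁻¹` and `B⁻¹` expands `tr(ABA⁻¹B⁻¹)` into traces of words of length at
most four in `A` and `B`, which Cayley–Hamilton again reduces to polynomials in `tr A`, `tr B`
and `tr AB`. -/

namespace Matrix

variable {R : Type*} [CommRing R]

theorem sq_fin_two_eq_trace_smul_sub_det_smul (M : Matrix (Fin 2) (Fin 2) R) :
    M ^ 2 = M.trace • M - M.det • (1 : Matrix (Fin 2) (Fin 2) R) := by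
  ext i j
  fin_cases i <;> fin_cases j <;>
    simp [sq, mul_apply, trace_fin_two, det_fin_two] <;> ring

theorem trace_sq_fin_two (M : Matrix (Fin 2) (Fin 2) R) :
    (M ^ 2).trace = M.trace ^ 2 - 2 * M.det := by
  rw [sq_fin_two_eq_trace_smul_sub_det_smul]
  simp [sq, mul_comm]

variable {A B : Matrix (Fin 2) (Fin 2) R}

theorem sq_fin_two_of_det_eq_one (hA : A.det = 1) : A ^ 2 = A.trace • A - 1 := by
  rw [sq_fin_two_eq_trace_smul_sub_det_smul, hA, one_smul]

theorem inv_fin_two_of_det_eq_one (hA : A.det = 1) : A⁻¹ = A.trace • 1 - A :=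
  inv_eq_right_inv <| by
    rw [mul_sub, mul_smul_comm, mul_one, ← sq, sq_fin_two_of_det_eq_one hA, sub_sub_cancel]

theorem trace_mul_sq_fin_two_of_det_eq_one (hB : B.det = 1) :
    (A * B ^ 2).trace = B.trace * (A * B).trace - A.trace := by
  rw [sq_fin_two_of_det_eq_one hB, mul_sub, mul_smul_comm, mul_one, trace_sub, trace_smul,
    smul_eq_mul]

theorem trace_commutator_fin_two_of_det_eq_one (hA : A.det = 1) (hB : B.det = 1) :
    (A * B * A⁻¹ * B⁻¹).trace =
      A.trace ^ 2 + B.trace ^ 2 + (A * B).trace ^ 2 -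
        A.trace * B.trace * (A * B).trace - 2 := by
  have hABB : (A * B * B).trace = B.trace * (A * B).trace - A.trace := by
    rw [mul_assoc, ← sq, trace_mul_sq_fin_two_of_det_eq_one hB]
  have hABA : (A * B * A).trace = A.trace * (A * B).trace - B.trace := by
    rw [trace_mul_cycle, ← sq, trace_mul_comm, trace_mul_sq_fin_two_of_det_eq_one hA,
      trace_mul_comm B]
  have hABAB : (A * B * A * B).trace = (A * B).trace ^ 2 - 2 := by
    rw [mul_assoc _ A, ← sq, trace_sq_fin_two, det_mul, hA, hB, mul_one, mul_one]
  rw [inv_fin_two_of_det_eq_one hA, inv_fin_two_of_det_eq_one hB]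
  simp only [mul_sub, mul_smul_comm, mul_one, sub_mul, smul_mul_assoc, trace_sub, trace_smul,
    smul_eq_mul, hABB, hABA, hABAB]
  ring

end Matrix

/-- The Fricke trace identity in SU(2):
`tr(ABA⁻¹B⁻¹) = (tr A)² + (tr B)² + (tr AB)² − (tr A)(tr B)(tr AB) − 2`.
In particular, if `ABA⁻¹B⁻¹ = −I` then
`(tr A)² + (tr B)² + (tr AB)² = (tr A)(tr B)(tr AB)`. -/
theorem su2_fricke_trace_identity
    (A B : Matrix (Fin 2) (Fin 2) ℂ)
    (hA : A ∈ Matrix.specialUnitaryGroup (Fin 2) ℂ)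
    (hB : B ∈ Matrix.specialUnitaryGroup (Fin 2) ℂ) :
    (A * B * A⁻¹ * B⁻¹).trace =
      A.trace ^ 2 + B.trace ^ 2 + (A * B).trace ^ 2 -
        A.trace * B.trace * (A * B).trace - 2 ∧
    (A * B * A⁻¹ * B⁻¹ = -1 →
      A.trace ^ 2 + B.trace ^ 2 + (A * B).trace ^ 2 =
        A.trace * B.trace * (A * B).trace) := by
  have fricke := trace_commutator_fin_two_of_det_eq_one
    (mem_specialUnitaryGroup_iff.mp hA).2 (mem_specialUnitaryGroup_iff.mp hB).2
  refine ⟨fricke, fun hcomm => ?_⟩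
  rw [hcomm, trace_neg, trace_one, Fintype.card_fin] at fricke
  linear_combination -fricke
end
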